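/- arXiv:2111.04725 — 3 statements merged into one kernel-verified Lean document; each statement's English description precedes it below -/
import Mathlib

section
/- Let G be a finite group of order N ≥ 2, let ρ be a faithful finite-dimensional complex representation of G with character χ, and let g ∈ G be a non-identity element. Then χ(1) − Re χ(g) ≥ 2 sin²(π/N). -/
/-!
Since `ρ g ^ N = 1` and `X ^ N - 1` is squarefree, `ρ g` is diagonalizable with `N`-th roots of
unity as eigenvalues, and by faithfulness not all of them are `1`. Hence
`χ 1 - Re χ g = ∑ (1 - Re λᵢ)` is a sum of nonnegative terms, one of which is at least
`1 - cos (2π / N) = 2 sin² (π / N)`.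
-/

open Complex Polynomial Module Module.End

namespace Module.End

section Field

variable {K V : Type*} [Field K] [AddCommGroup V] [Module K V] {f : End K V}

lemma HasEigenvalue.pow_eq_one_of_pow_eq_one {μ : K} (hμ : f.HasEigenvalue μ) {n : ℕ}
    (hf : f ^ n = 1) : μ ^ n = 1 := by
  obtain ⟨v, hv⟩ := hμ.exists_hasEigenvector
  have h := hv.pow_apply n
  rw [hf, one_apply] at h
  exact smul_left_injective K hv.2 (h.symm.trans (one_smul K v).symm)

lemma isSemisimple_of_pow_eq_one {n : ℕ} (hn : (n : K) ≠ 0) (hf : f ^ n = 1) :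
    f.IsSemisimple :=
  isSemisimple_of_squarefree_aeval_eq_zero
    (separable_X_pow_sub_C 1 hn one_ne_zero).squarefree (by simp [hf])

lemma IsSemisimple.eq_algebraMap_of_forall_hasEigenvalue [IsAlgClosed K] [FiniteDimensional K V]
    (hf : f.IsSemisimple) {c : K} (h : ∀ μ, f.HasEigenvalue μ → μ = c) :
    f = algebraMap K (End K V) c := by
  rw [← sub_eq_zero, (isSemisimple_sub_algebraMap_iff.mpr hf).eq_zero_iff_forall_eigenvalue]
  intro μ hμ
  rw [Algebra.algebraMap_eq_smul_one, one_eq_id, hasEigenvalue_sub_iff] at hμ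
  simpa using h _ hμ

lemma exists_hasEigenvalue_ne_one_of_pow_eq_one [IsAlgClosed K] [FiniteDimensional K V]
    {n : ℕ} (hn : (n : K) ≠ 0) (hf : f ^ n = 1) (hf1 : f ≠ 1) :
    ∃ μ, f.HasEigenvalue μ ∧ μ ≠ 1 := by
  by_contra! h
  have := (isSemisimple_of_pow_eq_one hn hf).eq_algebraMap_of_forall_hasEigenvalue h
  exact hf1 (by simpa using this)

end Field

lemma one_sub_re_le_finrank_sub_re_trace {V : Type*} [AddCommGroup V] [Module ℂ V]
    [FiniteDimensional ℂ V] {f : End ℂ V} (hnorm : ∀ μ, f.HasEigenvalue μ → ‖μ‖ ≤ 1) {μ : ℂ}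
    (hμ : f.HasEigenvalue μ) :
    1 - μ.re ≤ finrank ℂ V - (LinearMap.trace ℂ V f).re := by
  have hroots : ∀ ν, ν ∈ f.charpoly.roots ↔ f.HasEigenvalue ν := fun ν ↦ by
    rw [mem_roots (LinearMap.charpoly_monic f).ne_zero, hasEigenvalue_iff_isRoot_charpoly]
  have hsum : finrank ℂ V - (LinearMap.trace ℂ V f).re =
      (f.charpoly.roots.map fun ν ↦ 1 - ν.re).sum := by
    rw [trace_eq_sum_roots_charpoly_of_splits (IsAlgClosed.splits _), Multiset.sum_map_sub,
      ← LinearMap.charpoly_natDegree f, ← splits_iff_card_roots.mp (IsAlgClosed.splits _)]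
    simp only [Multiset.map_const', Multiset.sum_replicate, nsmul_eq_mul, mul_one, sub_right_inj]
    exact map_multiset_sum reAddGroupHom _
  rw [hsum]
  refine Multiset.single_le_sum (fun x hx ↦ ?_) _ (Multiset.mem_map_of_mem _ ((hroots μ).2 hμ))
  obtain ⟨ν, hν, rfl⟩ := Multiset.mem_map.mp hx
  linarith [re_le_norm ν, hnorm ν ((hroots ν).1 hν)]

end Module.End

lemma Complex.re_le_cos_two_pi_div_of_pow_eq_one {n : ℕ} (hn : n ≠ 0) {μ : ℂ} (hμn : μ ^ n = 1)
    (hμ : μ ≠ 1) : μ.re ≤ Real.cos (2 * Real.pi / n) := by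
  set θ := μ.arg
  have hμθ : μ = exp (θ * I) := by
    simpa [norm_eq_one_of_pow_eq_one hμn hn] using (norm_mul_exp_arg_mul_I μ).symm
  obtain ⟨k, hk⟩ : ∃ k : ℤ, (n * θ : ℂ) * I = k * (2 * Real.pi * I) := by
    rw [← exp_eq_one_iff, ← hμn, hμθ, ← exp_nat_mul]
    ring_nf
  have hθ : n * θ = k * (2 * Real.pi) := by simpa using congrArg im hk
  have hk0 : k ≠ 0 := by
    rintro rfl
    have hθ0 : θ = 0 := by simpa [hn] using hθ
    exact hμ (by rw [hμθ, hθ0]; simp)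
  have hθ_ge : 2 * Real.pi / n ≤ |θ| := by
    rw [div_le_iff₀ (by positivity)]
    calc 2 * Real.pi = 1 * (2 * Real.pi) := (one_mul _).symm
      _ ≤ |(k : ℝ)| * (2 * Real.pi) := by gcongr; exact_mod_cast Int.one_le_abs hk0
      _ = |θ| * n := by
        rw [← abs_of_pos Real.two_pi_pos, ← abs_mul, ← hθ, abs_mul, Nat.abs_cast, mul_comm]
  rw [hμθ, exp_ofReal_mul_I_re, ← Real.cos_abs]
  exact Real.cos_le_cos_of_nonneg_of_le_pi (by positivity) (abs_arg_le_pi μ) hθ_ge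

theorem char_one_sub_re_char_ge_general
    {G : Type*} [Group G] [Fintype G]
    {V : Type*} [AddCommGroup V] [Module ℂ V] [FiniteDimensional ℂ V]
    (ρ : Representation ℂ G V) (hfaith : Function.Injective ρ)
    (g : G) (hg : g ≠ 1) :
    2 * Real.sin (Real.pi / (Fintype.card G : ℝ)) ^ 2 ≤
      (LinearMap.trace ℂ V (ρ 1)).re - (LinearMap.trace ℂ V (ρ g)).re := by
  have hN : Fintype.card G ≠ 0 := Fintype.card_ne_zero
  have hpow : ρ g ^ Fintype.card G = 1 := by rw [← map_pow, pow_card_eq_one, map_one]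
  have hne : ρ g ≠ 1 := fun h ↦ hg (hfaith (h.trans (map_one ρ).symm))
  obtain ⟨μ, hμ, hμ1⟩ := exists_hasEigenvalue_ne_one_of_pow_eq_one (by exact_mod_cast hN) hpow hne
  have hμ_le := one_sub_re_le_finrank_sub_re_trace
    (fun ν hν ↦ (norm_eq_one_of_pow_eq_one (hν.pow_eq_one_of_pow_eq_one hpow) hN).le) hμ
  have hμ_re := re_le_cos_two_pi_div_of_pow_eq_one hN (hμ.pow_eq_one_of_pow_eq_one hpow) hμ1
  rw [map_one, LinearMap.trace_one, natCast_re, Real.sin_sq_eq_half_sub, mul_div_assoc']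
  linarith

/-- For a faithful finite-dimensional complex representation of a finite group
`G` of order `N ≥ 2` with character `χ` and a non-identity element `g`,
`χ 1 - Re (χ g) ≥ 2 sin²(π/N)`. -/
theorem char_one_sub_re_char_ge
    {G : Type*} [Group G] [Fintype G] (hN : 2 ≤ Fintype.card G)
    {V : Type*} [AddCommGroup V] [Module ℂ V] [FiniteDimensional ℂ V]
    (ρ : Representation ℂ G V) (hfaith : Function.Injective ρ)
    (g : G) (hg : g ≠ 1) :
    2 * Real.sin (Real.pi / (Fintype.card G : ℝ)) ^ 2 ≤
      (LinearMap.trace ℂ V (ρ 1)).re - (LinearMap.trace ℂ V (ρ g)).re :=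
  char_one_sub_re_char_ge_general ρ hfaith g hg
end

section
/- Let G be a finite group of order N ≥ 2, let ρ be a faithful finite-dimensional complex representation of G with character χ, let g ∈ G be a non-identity element, and let d ≥ 2 be an integer. Then the series Σ_{n=1}^∞ Re χ(gⁿ)/nᵈ converges absolutely and satisfies Σ_{n=1}^∞ Re χ(gⁿ)/nᵈ ≤ ζ(d) χ(1) − 2 sin²(π/N), where ζ(d) = Σ_{n=1}^∞ n^{−d}. -/
/-!
Let `N = |G|`. Every `ρ h` satisfies `ρ h ^ N = 1`, so its eigenvalues are `N`-th roots of unity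
and `|Re χ(h)| ≤ χ(1)`; this bounds every term of the series by `χ(1) / nᵈ`. Since `X ^ N - 1` is
squarefree, `ρ g` is semisimple, so `ρ g ≠ 1` forces an eigenvalue `μ ≠ 1`, and an `N`-th root
of unity `μ ≠ 1` has `Re μ ≤ cos (2π/N) = 1 - 2 sin² (π/N)`. Hence the first term loses at least
`2 sin² (π/N)` against its bound `χ(1)`.
-/

open Polynomial Module.End Real

section Eigenvalues

variable {K V : Type*} [Field K] [AddCommGroup V] [Module K V] {f : Module.End K V} {N : ℕ}

lemma Module.End.HasEigenvalue.pow_eq_one_of_pow_eq_one_s5 {μ : K} (hμ : f.HasEigenvalue μ)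
    (hf : f ^ N = 1) : μ ^ N = 1 := by
  obtain ⟨v, hv⟩ := hμ.exists_hasEigenvector
  have hvN : μ ^ N • v = (1 : K) • v := by
    rw [← hv.pow_apply, hf, one_smul, Module.End.one_apply]
  exact smul_left_injective K hv.2 hvN

variable [IsAlgClosed K] [FiniteDimensional K V]

lemma Module.End.card_roots_charpoly (f : Module.End K V) :
    Multiset.card f.charpoly.roots = Module.finrank K V := by
  rw [splits_iff_card_roots.mp (IsAlgClosed.splits _), LinearMap.charpoly_natDegree]

lemma Module.End.exists_hasEigenvalue_ne_one_of_pow_eq_one_s5 (hN : (N : K) ≠ 0) (hf : f ^ N = 1)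
    (hf1 : f ≠ 1) : ∃ μ, f.HasEigenvalue μ ∧ μ ≠ 1 := by
  have hss : (f - algebraMap K _ 1).IsSemisimple := by
    refine isSemisimple_sub_algebraMap_iff.mpr
      (isSemisimple_of_squarefree_aeval_eq_zero (X_pow_sub_one_separable_iff.mpr hN).squarefree ?_)
    simp [hf]
  obtain ⟨μ, hμ, hμ0⟩ : ∃ μ, (f - algebraMap K _ 1).HasEigenvalue μ ∧ μ ≠ 0 := by
    by_contra! h
    exact hf1 (sub_eq_zero.mp (by simpa using hss.eq_zero_iff_forall_eigenvalue.mpr h))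
  obtain ⟨v, hv⟩ := hμ.exists_hasEigenvector
  refine ⟨μ + 1, hasEigenvalue_of_hasEigenvector ⟨mem_eigenspace_iff.mpr ?_, hv.2⟩, by simpa⟩
  have hfv := hv.apply_eq_smul
  simp only [LinearMap.sub_apply, map_one, Module.End.one_apply, sub_eq_iff_eq_add] at hfv
  rw [hfv, add_smul, one_smul]

end Eigenvalues

lemma norm_multiset_sum_le_card {E : Type*} [SeminormedAddCommGroup E] {s : Multiset E}
    (hs : ∀ x ∈ s, ‖x‖ ≤ 1) : ‖s.sum‖ ≤ Multiset.card s :=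
  calc ‖s.sum‖ ≤ (s.map norm).sum := norm_multiset_sum_le s
    _ ≤ Multiset.card (s.map norm) • (1 : ℝ) :=
        Multiset.sum_le_card_nsmul _ _ (by simpa using hs)
    _ = Multiset.card s := by simp

lemma Real.cos_le_cos_of_mem_Icc {a x : ℝ} (ha : 0 ≤ a) (hax : a ≤ x) (hx : x ≤ 2 * π - a) :
    cos x ≤ cos a := by
  rcases le_total x π with hxπ | hπx
  · exact cos_le_cos_of_nonneg_of_le_pi ha hxπ hax
  · rw [← cos_two_pi_sub x]
    exact cos_le_cos_of_nonneg_of_le_pi ha (by linarith) (by linarith)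

lemma Complex.re_le_cos_of_pow_eq_one {N : ℕ} (hN : N ≠ 0) {μ : ℂ} (hμ : μ ^ N = 1)
    (hμ1 : μ ≠ 1) : μ.re ≤ Real.cos (2 * π / N) := by
  have : NeZero N := ⟨hN⟩
  obtain ⟨k, hkN, rfl⟩ := (isPrimitiveRoot_exp N hN).eq_pow_of_pow_eq_one hμ
  have hk : k ≠ 0 := by rintro rfl; exact hμ1 (pow_zero _)
  have hk1 : (1 : ℝ) ≤ k := by exact_mod_cast Nat.one_le_iff_ne_zero.mpr hk
  have hkN' : (k : ℝ) + 1 ≤ N := by exact_mod_cast hkN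
  rw [← exp_nat_mul, show (k : ℂ) * (2 * π * I / N) = (k * (2 * π / N) : ℝ) * I by
    push_cast; ring, exp_ofReal_mul_I_re]
  apply Real.cos_le_cos_of_mem_Icc (by positivity)
  · exact le_mul_of_one_le_left (by positivity) hk1
  · rw [show 2 * π - 2 * π / N = (N - 1) * (2 * π / N) by field_simp]
    exact mul_le_mul_of_nonneg_right (by linarith) (by positivity)

namespace Module.End

variable {V : Type*} [AddCommGroup V] [Module ℂ V] [FiniteDimensional ℂ V]
  {f : Module.End ℂ V} {N : ℕ}

lemma norm_eq_one_of_mem_roots_charpoly_of_pow_eq_one (hN : N ≠ 0) (hf : f ^ N = 1) {μ : ℂ}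
    (hμ : μ ∈ f.charpoly.roots) : ‖μ‖ = 1 := by
  have hμf : f.HasEigenvalue μ :=
    (hasEigenvalue_iff_isRoot_charpoly f μ).mpr (mem_roots'.mp hμ).2
  exact Complex.norm_eq_one_of_pow_eq_one (hμf.pow_eq_one_of_pow_eq_one_s5 hf) hN

lemma norm_trace_le_finrank_of_pow_eq_one (hN : N ≠ 0) (hf : f ^ N = 1) :
    ‖LinearMap.trace ℂ V f‖ ≤ Module.finrank ℂ V := by
  rw [trace_eq_sum_roots_charpoly_of_splits (IsAlgClosed.splits _), ← f.card_roots_charpoly]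
  exact norm_multiset_sum_le_card fun μ hμ ↦
    (norm_eq_one_of_mem_roots_charpoly_of_pow_eq_one hN hf hμ).le

lemma re_trace_le_finrank_sub_of_pow_eq_one (hN : N ≠ 0) (hf : f ^ N = 1) (hf1 : f ≠ 1) :
    (LinearMap.trace ℂ V f).re ≤ Module.finrank ℂ V - 2 * sin (π / N) ^ 2 := by
  obtain ⟨μ, hμ, hμ1⟩ := exists_hasEigenvalue_ne_one_of_pow_eq_one_s5 (by exact_mod_cast hN) hf hf1
  obtain ⟨t, ht⟩ := Multiset.exists_cons_of_mem <|
    (mem_roots f.charpoly_monic.ne_zero).mpr ((hasEigenvalue_iff_isRoot_charpoly f μ).mp hμ)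
  have hcard : Multiset.card t + 1 = Module.finrank ℂ V := by
    rw [← f.card_roots_charpoly, ht, Multiset.card_cons]
  have ht_sum : ‖t.sum‖ ≤ Multiset.card t := norm_multiset_sum_le_card fun ν hν ↦
    (norm_eq_one_of_mem_roots_charpoly_of_pow_eq_one hN hf (ht ▸ Multiset.mem_cons_of_mem hν)).le
  have hμ_re := Complex.re_le_cos_of_pow_eq_one hN (hμ.pow_eq_one_of_pow_eq_one_s5 hf) hμ1
  rw [mul_div_assoc, cos_two_mul_eq_one_sub] at hμ_re
  rw [trace_eq_sum_roots_charpoly_of_splits (IsAlgClosed.splits _), ht, Multiset.sum_cons,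
    Complex.add_re, ← hcard, Nat.cast_succ]
  linarith [Complex.re_le_norm t.sum]

end Module.End

lemma tsum_div_le_of_abs_le {a b : ℕ → ℝ} {C δ : ℝ} (hb : ∀ n, 0 < b n) (hb0 : b 0 = 1)
    (hsum : Summable fun n ↦ 1 / b n) (ha : ∀ n, |a n| ≤ C) (ha0 : a 0 ≤ C - δ) :
    Summable (fun n ↦ |a n| / b n) ∧ ∑' n, a n / b n ≤ (∑' n, 1 / b n) * C - δ := by
  have hC : Summable fun n ↦ C / b n := (hsum.mul_right C).congr fun n ↦ by ring
  have habs : Summable fun n ↦ |a n| / b n :=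
    .of_nonneg_of_le (fun n ↦ div_nonneg (abs_nonneg _) (hb n).le)
      (fun n ↦ div_le_div_of_nonneg_right (ha n) (hb n).le) hC
  have ha_sum : Summable fun n ↦ a n / b n :=
    .of_abs (habs.congr fun n ↦ by rw [abs_div, abs_of_pos (hb n)])
  refine ⟨habs, ?_⟩
  have hhead : δ ≤ ∑' n, (C / b n - a n / b n) := by
    refine le_trans ?_ ((hC.sub ha_sum).le_tsum 0 fun n _ ↦ ?_)
    · rw [hb0, div_one, div_one]; linarith
    · rw [← sub_div]
      exact div_nonneg (by linarith [le_abs_self (a n), ha n]) (hb n).le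
  rw [hC.tsum_sub ha_sum] at hhead
  rw [← tsum_mul_right]
  simp only [one_div_mul_eq_div]
  linarith

lemma summable_one_div_nat_add_one_pow {d : ℕ} (hd : 2 ≤ d) :
    Summable fun n : ℕ ↦ 1 / ((n : ℝ) + 1) ^ d := by
  simpa using (summable_nat_add_iff 1).mpr (Real.summable_one_div_nat_pow.mpr hd)

theorem re_char_sum_le_general
    {G : Type*} [Group G] [Fintype G]
    {V : Type*} [AddCommGroup V] [Module ℂ V] [FiniteDimensional ℂ V]
    (ρ : Representation ℂ G V) (hfaith : Function.Injective ρ)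
    (g : G) (hg : g ≠ 1) (d : ℕ) (hd : 2 ≤ d) :
    Summable (fun n : ℕ =>
      |(LinearMap.trace ℂ V (ρ (g ^ (n + 1)))).re| / ((n : ℝ) + 1) ^ d) ∧
    ∑' n : ℕ, (LinearMap.trace ℂ V (ρ (g ^ (n + 1)))).re / ((n : ℝ) + 1) ^ d ≤
      (∑' n : ℕ, 1 / ((n : ℝ) + 1) ^ d) * (LinearMap.trace ℂ V (ρ 1)).re -
        2 * Real.sin (Real.pi / (Fintype.card G : ℝ)) ^ 2 := by
  have hN0 : Fintype.card G ≠ 0 := Fintype.card_ne_zero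
  have hρ_pow : ∀ h, ρ h ^ Fintype.card G = 1 := fun h ↦ by
    rw [← map_pow, pow_card_eq_one, map_one]
  have hρg : ρ g ≠ 1 := map_one ρ ▸ hfaith.ne hg
  rw [map_one, LinearMap.trace_one, Complex.natCast_re]
  refine tsum_div_le_of_abs_le (fun n ↦ by positivity) (by simp)
    (summable_one_div_nat_add_one_pow hd)
    (fun n ↦ (Complex.abs_re_le_norm _).trans
      (Module.End.norm_trace_le_finrank_of_pow_eq_one hN0 (hρ_pow _))) ?_
  simpa using Module.End.re_trace_le_finrank_sub_of_pow_eq_one hN0 (hρ_pow g) hρg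

/-- For a faithful finite-dimensional complex representation of a finite group
`G` of order `N ≥ 2` with character `χ`, a non-identity `g ∈ G` and an integer `d ≥ 2`, the
series `Σ_{n≥1} Re χ(gⁿ)/nᵈ` converges absolutely and is at most
`ζ(d) χ(1) - 2 sin²(π/N)`, where `ζ(d) = Σ_{n≥1} n⁻ᵈ`. -/
theorem re_char_sum_le
    {G : Type*} [Group G] [Fintype G] (hN : 2 ≤ Fintype.card G)
    {V : Type*} [AddCommGroup V] [Module ℂ V] [FiniteDimensional ℂ V]
    (ρ : Representation ℂ G V) (hfaith : Function.Injective ρ)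
    (g : G) (hg : g ≠ 1) (d : ℕ) (hd : 2 ≤ d) :
    Summable (fun n : ℕ =>
      |(LinearMap.trace ℂ V (ρ (g ^ (n + 1)))).re| / ((n : ℝ) + 1) ^ d) ∧
    ∑' n : ℕ, (LinearMap.trace ℂ V (ρ (g ^ (n + 1)))).re / ((n : ℝ) + 1) ^ d ≤
      (∑' n : ℕ, 1 / ((n : ℝ) + 1) ^ d) * (LinearMap.trace ℂ V (ρ 1)).re -
        2 * Real.sin (Real.pi / (Fintype.card G : ℝ)) ^ 2 :=
  re_char_sum_le_general ρ hfaith g hg d hd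
end

section
/- Let G be a finite group, χ the character of a faithful finite-dimensional complex representation of G, and d ≥ 3 an integer; set Δ = (d−2)/2 and for β > 0, g ∈ G define Z(β,g) = exp(Σ_{n=1}^∞ (e^{−nβΔ}/n) (χ(gⁿ) + conj(χ(gⁿ))) (1 − e^{−2nβ})/(1 − e^{−nβ})ᵈ). For an irreducible complex representation α of G with character χ_α, define the reduced partition function Z_α(β) = (dim α/|G|) Σ_{g∈G} conj(χ_α(g)) Z(β,g). Then lim_{β→0⁺} Z_α(β)/Z(β,1) = dim(α)²/|G|, where 1 is the identity of G. -/
/-- The `n`-th term (indexing `n : ℕ` corresponds to `n + 1 ≥ 1`) of the series defining the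
logarithm of the twisted partition function of a free scalar on `S^{d-1} × S¹_β`:
`(e^{-nβΔ}/n) (χ(gⁿ) + conj χ(gⁿ)) (1 - e^{-2nβ})/(1 - e^{-nβ})ᵈ` with `Δ = (d-2)/2`. -/
noncomputable def freeScalarLogTerm {G : Type*} [Group G] (χ : G → ℂ) (d : ℕ)
    (β : ℝ) (g : G) (n : ℕ) : ℂ :=
  ((Real.exp (-(((n : ℝ) + 1) * β * (((d : ℝ) - 2) / 2))) / ((n : ℝ) + 1) : ℝ) : ℂ) *
    (χ (g ^ (n + 1)) + star (χ (g ^ (n + 1)))) *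
    (((1 - Real.exp (-(2 * ((n : ℝ) + 1) * β))) /
        (1 - Real.exp (-(((n : ℝ) + 1) * β))) ^ d : ℝ) : ℂ)

/-- The twisted partition function `Z(β, g) = exp L(β, g)`. -/
noncomputable def freeScalarZ {G : Type*} [Group G] (χ : G → ℂ) (d : ℕ)
    (β : ℝ) (g : G) : ℂ :=
  Complex.exp (∑' n : ℕ, freeScalarLogTerm χ d β g n)

/-!
`Z(β, g) = exp L(β, g)` with `L` real, and `L(β, g) - L(β, 1) = Σₙ wₙ(β) · 2 (Re χ(gⁿ) - χ(1))`
with weights `wₙ(β) ≥ 0`. Each `ρ(h)` has finite order, so its eigenvalues are roots of unity and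
`Re χ(h) ≤ dim V = χ(1)`, with equality only if `ρ(h) = 1`, i.e. (by faithfulness) `h = 1`. Hence
for `g ≠ 1` all terms are `≤ 0` and the first one is `≤ w₁(β) · 2 (Re χ(g) - χ(1)) → -∞`, because
`w₁(β) ~ 2 β^{1-d}`. So `Z(β, g)/Z(β, 1) → [g = 1]`, and the reduced partition function divided
by `Z(β, 1)` tends to `(dim α / |G|) · conj χ_α(1) = dim(α)² / |G|`.
-/

open Polynomial

lemma Complex.eq_one_of_re_eq_one {z : ℂ} (hz : ‖z‖ ≤ 1) (hre : z.re = 1) : z = 1 := by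
  have him : z.im = 0 :=
    Complex.abs_re_eq_norm.mp (le_antisymm (Complex.abs_re_le_norm z) (by rw [hre]; simpa))
  exact Complex.ext hre him

lemma Multiset.re_sum_lt_card {s : Multiset ℂ} (hs : ∀ z ∈ s, ‖z‖ ≤ 1)
    (hne : ∃ z ∈ s, z ≠ 1) : s.sum.re < s.card := by
  have hre : ∀ z ∈ s, z.re ≤ 1 := fun z hz => (Complex.re_le_norm z).trans (hs z hz)
  calc s.sum.re = (s.map Complex.re).sum := map_multiset_sum Complex.reAddGroupHom s
    _ < (s.map fun _ => (1 : ℝ)).sum := by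
      refine Multiset.sum_lt_sum hre ?_
      obtain ⟨z, hz, hz1⟩ := hne
      exact ⟨z, hz, (hre z hz).lt_of_ne fun h => hz1 (Complex.eq_one_of_re_eq_one (hs z hz) h)⟩
    _ = s.card := by simp

namespace Module.End

variable {V : Type*} [AddCommGroup V] [Module ℂ V] [FiniteDimensional ℂ V]
  {f : End ℂ V} {m : ℕ}

lemma pow_eq_one_of_mem_roots_charpoly (hf : f ^ m = 1) {μ : ℂ} (hμ : μ ∈ f.charpoly.roots) :
    μ ^ m = 1 := by
  obtain ⟨v, hv⟩ := ((hasEigenvalue_iff_isRoot_charpoly f μ).mpr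
    (isRoot_of_mem_roots hμ)).exists_hasEigenvector
  have h : (μ ^ m - 1) • v = 0 := by
    rw [sub_smul, one_smul, ← hv.pow_apply m, hf, one_apply, sub_self]
  exact sub_eq_zero.mp ((smul_eq_zero.mp h).resolve_right hv.2)

lemma norm_le_one_of_mem_roots_charpoly (hm : m ≠ 0) (hf : f ^ m = 1) {μ : ℂ}
    (hμ : μ ∈ f.charpoly.roots) : ‖μ‖ ≤ 1 :=
  (Complex.norm_eq_one_of_pow_eq_one (pow_eq_one_of_mem_roots_charpoly hf hμ) hm).le

lemma card_roots_charpoly_s8 (f : End ℂ V) : f.charpoly.roots.card = finrank ℂ V := by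
  rw [splits_iff_card_roots.mp (IsAlgClosed.splits _), LinearMap.charpoly_natDegree]

lemma trace_eq_sum_roots_charpoly (f : End ℂ V) :
    LinearMap.trace ℂ V f = f.charpoly.roots.sum :=
  trace_eq_sum_roots_charpoly_of_splits (IsAlgClosed.splits _)

lemma norm_trace_le_finrank (hm : m ≠ 0) (hf : f ^ m = 1) :
    ‖LinearMap.trace ℂ V f‖ ≤ finrank ℂ V := by
  rw [trace_eq_sum_roots_charpoly, ← card_roots_charpoly_s8 f]
  calc ‖f.charpoly.roots.sum‖ ≤ (f.charpoly.roots.map (‖·‖)).sum := norm_multiset_sum_le _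
    _ ≤ (f.charpoly.roots.map fun _ => (1 : ℝ)).sum :=
      Multiset.sum_map_le_sum_map _ _ fun μ hμ => norm_le_one_of_mem_roots_charpoly hm hf hμ
    _ = f.charpoly.roots.card := by simp

/-- An endomorphism of finite order is semisimple, hence the identity once it is unipotent. -/
lemma eq_one_of_roots_charpoly_eq_one (hm : m ≠ 0) (hf : f ^ m = 1)
    (h : ∀ μ ∈ f.charpoly.roots, μ = 1) : f = 1 := by
  have hchar : f.charpoly = (X - C 1) ^ finrank ℂ V := by
    rw [(IsAlgClosed.splits _).eq_prod_roots_of_monic (LinearMap.charpoly_monic f),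
      Multiset.eq_replicate_of_mem h, Multiset.map_replicate, Multiset.prod_replicate,
      card_roots_charpoly_s8]
  have hsq : Squarefree (minpoly ℂ f) :=
    ((X_pow_sub_one_separable_iff.mpr (Nat.cast_ne_zero.mpr hm)).squarefree).squarefree_of_dvd
      (minpoly.dvd ℂ f (by simp [hf]))
  rcases (finrank ℂ V).eq_zero_or_pos with hV | hV
  · have : Subsingleton V := Module.finrank_zero_iff.mp hV
    exact Subsingleton.elim _ _
  have hdvd : minpoly ℂ f ∣ X - C 1 :=
    (hsq.dvd_pow_iff_dvd hV.ne').mp (hchar ▸ LinearMap.minpoly_dvd_charpoly f)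
  simpa [sub_eq_zero] using aeval_eq_zero_of_dvd_aeval_eq_zero hdvd (minpoly.aeval ℂ f)

lemma re_trace_lt_finrank (hm : m ≠ 0) (hf : f ^ m = 1) (hf1 : f ≠ 1) :
    (LinearMap.trace ℂ V f).re < finrank ℂ V := by
  rw [trace_eq_sum_roots_charpoly, ← card_roots_charpoly_s8 f]
  refine Multiset.re_sum_lt_card (fun μ hμ => norm_le_one_of_mem_roots_charpoly hm hf hμ) ?_
  by_contra! h
  exact hf1 (eq_one_of_roots_charpoly_eq_one hm hf h)

end Module.End

namespace Representation

variable {G : Type*} [Group G] [Finite G] {V : Type*} [AddCommGroup V] [Module ℂ V]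
  [FiniteDimensional ℂ V] (ρ : Representation ℂ G V)

lemma norm_trace_le_finrank (g : G) : ‖LinearMap.trace ℂ V (ρ g)‖ ≤ Module.finrank ℂ V :=
  Module.End.norm_trace_le_finrank (orderOf_pos g).ne'
    (by rw [← map_pow, pow_orderOf_eq_one, map_one])

lemma re_trace_lt_finrank (hρ : Function.Injective ρ) {g : G} (hg : g ≠ 1) :
    (LinearMap.trace ℂ V (ρ g)).re < Module.finrank ℂ V :=
  Module.End.re_trace_lt_finrank (orderOf_pos g).ne'
    (by rw [← map_pow, pow_orderOf_eq_one, map_one]) (hρ.ne_iff' (map_one ρ) |>.mpr hg)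

end Representation

open Filter Topology Real

lemma Real.one_sub_exp_neg_pos {x : ℝ} (hx : 0 < x) : 0 < 1 - Real.exp (-x) :=
  sub_pos.mpr (exp_lt_one_iff.mpr (neg_lt_zero.mpr hx))

lemma Summable.tsum_le_apply_zero {f : ℕ → ℝ} (hf : Summable f) (h : ∀ n, f (n + 1) ≤ 0) :
    ∑' n, f n ≤ f 0 := by
  rw [hf.tsum_eq_zero_add]
  exact add_le_of_nonpos_right (tsum_nonpos h)

namespace FreeScalar

/-- `weight d β n` is `w_{n+1}(β)`, with the index shift of `freeScalarLogTerm`. -/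
noncomputable def weight (d : ℕ) (β : ℝ) (n : ℕ) : ℝ :=
  Real.exp (-(((n : ℝ) + 1) * β * (((d : ℝ) - 2) / 2))) / ((n : ℝ) + 1) *
    ((1 - Real.exp (-(2 * ((n : ℝ) + 1) * β))) / (1 - Real.exp (-(((n : ℝ) + 1) * β))) ^ d)

section Weight

variable {d : ℕ} {β : ℝ}

lemma weight_nonneg (hβ : 0 < β) (n : ℕ) : 0 ≤ weight d β n := by
  have hx : 0 < ((n : ℝ) + 1) * β := by positivity
  have h1 : Real.exp (-(((n : ℝ) + 1) * β)) < 1 := exp_lt_one_iff.mpr (by linarith)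
  have h2 : Real.exp (-(2 * ((n : ℝ) + 1) * β)) < 1 := exp_lt_one_iff.mpr (by linarith)
  unfold weight
  exact mul_nonneg (by positivity) (div_nonneg (by linarith) (pow_nonneg (by linarith) d))

lemma weight_le (hβ : 0 < β) (n : ℕ) :
    weight d β n ≤
      ((1 - Real.exp (-β)) ^ d)⁻¹ * Real.exp (-(β * (((d : ℝ) - 2) / 2))) ^ (n + 1) := by
  have hn : (1 : ℝ) ≤ (n : ℝ) + 1 := by simp
  have hgap := one_sub_exp_neg_pos hβ
  have hprefactor : Real.exp (-(((n : ℝ) + 1) * β * (((d : ℝ) - 2) / 2))) / ((n : ℝ) + 1) ≤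
      Real.exp (-(β * (((d : ℝ) - 2) / 2))) ^ (n + 1) := by
    rw [← Real.exp_nat_mul]
    refine (div_le_self (exp_nonneg _) hn).trans_eq (congrArg Real.exp ?_)
    push_cast; ring
  have hden : (1 - Real.exp (-β)) ^ d ≤ (1 - Real.exp (-(((n : ℝ) + 1) * β))) ^ d := by
    gcongr
    nlinarith
  have hratio : (1 - Real.exp (-(2 * ((n : ℝ) + 1) * β))) /
      (1 - Real.exp (-(((n : ℝ) + 1) * β))) ^ d ≤ ((1 - Real.exp (-β)) ^ d)⁻¹ := by
    rw [← one_div]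
    exact div_le_div₀ zero_le_one (by linarith [exp_pos (-(2 * ((n : ℝ) + 1) * β))])
      (pow_pos hgap d) hden
  rw [weight, mul_comm]
  exact mul_le_mul hratio hprefactor (by positivity) (by positivity)

lemma summable_weight (hd : 3 ≤ d) (hβ : 0 < β) : Summable (weight d β) := by
  have hΔ : 0 < ((d : ℝ) - 2) / 2 := by
    have : (3 : ℝ) ≤ d := by exact_mod_cast hd
    linarith
  have hq : Real.exp (-(β * (((d : ℝ) - 2) / 2))) < 1 :=
    exp_lt_one_iff.mpr (neg_lt_zero.mpr (mul_pos hβ hΔ))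
  refine Summable.of_nonneg_of_le (weight_nonneg hβ) (weight_le hβ) ?_
  exact ((summable_nat_add_iff 1).mpr
    (summable_geometric_of_lt_one (exp_nonneg _) hq)).mul_left _

lemma summable_weight_mul (hd : 3 ≤ d) (hβ : 0 < β) {c : ℕ → ℝ} {B : ℝ}
    (hc : ∀ n, |c n| ≤ B) : Summable fun n => weight d β n * c n :=
  (summable_weight hd hβ).mul_right B |>.of_norm_bounded fun n => by
    rw [Real.norm_eq_abs, abs_mul, abs_of_nonneg (weight_nonneg hβ n)]
    exact mul_le_mul_of_nonneg_left (hc n) (weight_nonneg hβ n)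

lemma weight_zero_eq (hd : 1 ≤ d) (hβ : 0 < β) :
    weight d β 0 = Real.exp (-(β * (((d : ℝ) - 2) / 2))) * (1 + Real.exp (-β)) *
      ((1 - Real.exp (-β)) ^ (d - 1))⁻¹ := by
  have hgap := (one_sub_exp_neg_pos hβ).ne'
  have hsq : Real.exp (-(2 * β)) = Real.exp (-β) ^ 2 := by rw [← Real.exp_nat_mul]; ring_nf
  obtain ⟨k, rfl⟩ := Nat.exists_eq_add_of_le' hd
  simp only [weight, CharP.cast_eq_zero, zero_add, one_mul, mul_one, div_one,
    add_tsub_cancel_right]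
  rw [hsq]
  field_simp
  ring

lemma tendsto_weight_zero_atTop (hd : 2 ≤ d) :
    Tendsto (fun β => weight d β 0) (𝓝[>] 0) atTop := by
  have hprefactor : Tendsto (fun β : ℝ => Real.exp (-(β * (((d : ℝ) - 2) / 2))) *
      (1 + Real.exp (-β))) (𝓝[>] 0) (𝓝 2) :=
    ((by fun_prop : Continuous fun β : ℝ => Real.exp (-(β * (((d : ℝ) - 2) / 2))) *
      (1 + Real.exp (-β))).tendsto' 0 2 (by norm_num)).mono_left nhdsWithin_le_nhds
  have hgap : Tendsto (fun β : ℝ => (1 - Real.exp (-β)) ^ (d - 1)) (𝓝[>] 0) (𝓝[>] 0) := by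
    refine tendsto_nhdsWithin_iff.mpr ⟨?_, ?_⟩
    · exact ((by fun_prop : Continuous fun β : ℝ => (1 - Real.exp (-β)) ^ (d - 1)).tendsto'
        0 0 (by simp; omega)).mono_left nhdsWithin_le_nhds
    · filter_upwards [self_mem_nhdsWithin] with β hβ
      exact Set.mem_Ioi.mpr (pow_pos (one_sub_exp_neg_pos hβ) _)
  refine (hprefactor.pos_mul_atTop two_pos hgap.inv_tendsto_nhdsGT_zero).congr' ?_
  filter_upwards [self_mem_nhdsWithin] with β hβ
  exact (weight_zero_eq (by omega) hβ).symm

end Weight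

section Character

variable {G : Type*} [Group G] {χ : G → ℂ} {d : ℕ} {β : ℝ}

noncomputable def logZ (χ : G → ℂ) (d : ℕ) (β : ℝ) (g : G) : ℝ :=
  ∑' n, weight d β n * (2 * (χ (g ^ (n + 1))).re)

lemma freeScalarLogTerm_eq (χ : G → ℂ) (d : ℕ) (β : ℝ) (g : G) (n : ℕ) :
    freeScalarLogTerm χ d β g n = ((weight d β n * (2 * (χ (g ^ (n + 1))).re) : ℝ) : ℂ) := by
  rw [freeScalarLogTerm, weight, Complex.star_def, Complex.add_conj]
  push_cast
  ring

lemma freeScalarZ_eq_exp_logZ (χ : G → ℂ) (d : ℕ) (β : ℝ) (g : G) :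
    freeScalarZ χ d β g = Real.exp (logZ χ d β g) := by
  simp only [freeScalarZ, logZ, freeScalarLogTerm_eq, Complex.ofReal_exp, Complex.ofReal_tsum]

lemma freeScalarZ_div_freeScalarZ_one (χ : G → ℂ) (d : ℕ) (β : ℝ) (g : G) :
    freeScalarZ χ d β g / freeScalarZ χ d β 1 = Real.exp (logZ χ d β g - logZ χ d β 1) := by
  rw [freeScalarZ_eq_exp_logZ, freeScalarZ_eq_exp_logZ, Real.exp_sub, Complex.ofReal_div]

lemma logZ_sub_logZ_one_le (hd : 3 ≤ d) (hβ : 0 < β) (hχ : ∀ h, ‖χ h‖ ≤ (χ 1).re) (g : G) :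
    logZ χ d β g - logZ χ d β 1 ≤ weight d β 0 * (2 * ((χ g).re - (χ 1).re)) := by
  have hbound : ∀ h n, |2 * (χ (h ^ (n + 1))).re| ≤ 2 * (χ 1).re := fun h n => by
    rw [abs_mul, abs_two]
    exact mul_le_mul_of_nonneg_left ((Complex.abs_re_le_norm _).trans (hχ _)) zero_le_two
  have hsg := summable_weight_mul hd hβ (hbound g)
  have hs1 := summable_weight_mul hd hβ (hbound 1)
  have hsum := hsg.sub hs1
  rw [logZ, logZ, ← hsg.tsum_sub hs1]
  simp only [one_pow, ← mul_sub, ← mul_sub] at hsum ⊢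
  refine (hsum.tsum_le_apply_zero fun n => ?_).trans_eq (by simp)
  exact mul_nonpos_of_nonneg_of_nonpos (weight_nonneg hβ _)
    (by linarith [(Complex.re_le_norm _).trans (hχ (g ^ (n + 1 + 1)))])

lemma tendsto_exp_logZ_sub_logZ_one (hd : 3 ≤ d) (hχ : ∀ h, ‖χ h‖ ≤ (χ 1).re) {g : G}
    (hg : (χ g).re < (χ 1).re) :
    Tendsto (fun β => Real.exp (logZ χ d β g - logZ χ d β 1)) (𝓝[>] 0) (𝓝 0) := by
  have hleading := (tendsto_weight_zero_atTop (d := d) (by omega)).atTop_mul_const_of_neg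
    (by linarith : 2 * ((χ g).re - (χ 1).re) < 0)
  refine tendsto_exp_atBot.comp (tendsto_atBot_mono' _ ?_ hleading)
  filter_upwards [self_mem_nhdsWithin] with β hβ
  exact logZ_sub_logZ_one_le hd hβ hχ g

lemma tendsto_freeScalarZ_div_freeScalarZ_one [DecidableEq G] (hd : 3 ≤ d)
    (hχ : ∀ h, ‖χ h‖ ≤ (χ 1).re) (hsep : ∀ h ≠ 1, (χ h).re < (χ 1).re) (g : G) :
    Tendsto (fun β => freeScalarZ χ d β g / freeScalarZ χ d β 1) (𝓝[>] 0)
      (𝓝 (if g = 1 then 1 else 0)) := by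
  simp only [freeScalarZ_div_freeScalarZ_one]
  split_ifs with hg
  · simp [hg]
  · exact (Complex.continuous_ofReal.tendsto' 0 0 Complex.ofReal_zero).comp
      (tendsto_exp_logZ_sub_logZ_one hd hχ (hsep g hg))

end Character

end FreeScalar

theorem freeScalar_reduced_partition_limit_general
    {G : Type*} [Group G] [Fintype G]
    {V : Type*} [AddCommGroup V] [Module ℂ V] [FiniteDimensional ℂ V]
    (ρ : Representation ℂ G V) (hfaith : Function.Injective ρ)
    (d : ℕ) (hd : 3 ≤ d)
    {W : Type*} [AddCommGroup W] [Module ℂ W] [FiniteDimensional ℂ W]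
    (α : Representation ℂ G W) :
    Filter.Tendsto
      (fun β : ℝ =>
        (((Module.finrank ℂ W : ℂ) / (Fintype.card G : ℂ)) *
            ∑ g : G, star (LinearMap.trace ℂ W (α g)) *
              freeScalarZ (fun h => LinearMap.trace ℂ V (ρ h)) d β g) /
          freeScalarZ (fun h => LinearMap.trace ℂ V (ρ h)) d β 1)
      (nhdsWithin 0 (Set.Ioi 0))
      (nhds ((Module.finrank ℂ W : ℂ) ^ 2 / (Fintype.card G : ℂ))) := by
  classical
  have hχ1 : LinearMap.trace ℂ V (ρ 1) = Module.finrank ℂ V := by simp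
  have hratio := FreeScalar.tendsto_freeScalarZ_div_freeScalarZ_one
    (χ := fun h => LinearMap.trace ℂ V (ρ h)) hd
    (fun h => by simpa [hχ1] using ρ.norm_trace_le_finrank h)
    (fun h hh => by simpa [hχ1] using ρ.re_trace_lt_finrank hfaith hh)
  have hsum := (tendsto_finsetSum Finset.univ fun g _ =>
    (hratio g).const_mul (star (LinearMap.trace ℂ W (α g)))).const_mul
      ((Module.finrank ℂ W : ℂ) / (Fintype.card G : ℂ))
  convert hsum using 2 with β
  · simp only [mul_div_assoc, Finset.sum_div]
  · simp [sq, mul_div_right_comm]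

/-- Let `χ` be the character of a faithful finite-dimensional complex
representation of a finite group `G`, `d ≥ 3`, and let `α` be an irreducible complex
representation of `G` with character `χ_α`. The reduced partition function
`Z_α(β) = (dim α / |G|) Σ_g conj(χ_α g) Z(β, g)` satisfies
`Z_α(β)/Z(β, 1) → dim(α)²/|G|` as `β → 0⁺`. -/
theorem freeScalar_reduced_partition_limit
    {G : Type*} [Group G] [Fintype G]
    {V : Type*} [AddCommGroup V] [Module ℂ V] [FiniteDimensional ℂ V]
    (ρ : Representation ℂ G V) (hfaith : Function.Injective ρ)
    (d : ℕ) (hd : 3 ≤ d)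
    {W : Type*} [AddCommGroup W] [Module ℂ W] [FiniteDimensional ℂ W]
    (α : Representation ℂ G W)
    (hα : IsSimpleModule (MonoidAlgebra ℂ G) α.asModule) :
    Filter.Tendsto
      (fun β : ℝ =>
        (((Module.finrank ℂ W : ℂ) / (Fintype.card G : ℂ)) *
            ∑ g : G, star (LinearMap.trace ℂ W (α g)) *
              freeScalarZ (fun h => LinearMap.trace ℂ V (ρ h)) d β g) /
          freeScalarZ (fun h => LinearMap.trace ℂ V (ρ h)) d β 1)
      (nhdsWithin 0 (Set.Ioi 0))
      (nhds ((Module.finrank ℂ W : ℂ) ^ 2 / (Fintype.card G : ℂ))) :=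
  freeScalar_reduced_partition_limit_general ρ hfaith d hd α
end
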